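/- arXiv:2603.08404 — 2 statements merged into one kernel-verified Lean document; each statement's English description precedes it below -/
import Mathlib

section
/- Let H be a real inner product space, let D : H → H be a linear map that is symmetric (⟨Dx, y⟩ = ⟨x, Dy⟩ for all x, y ∈ H), and let E ⊆ H be a finite-dimensional subspace with orthogonal complement Eᗮ. Suppose there are real numbers 0 ≤ a < b such that ‖Dw‖ ≤ a‖w‖ for all w ∈ E and ‖Dw‖ ≥ b‖w‖ for all w ∈ Eᗮ. If w ∈ H and λ ∈ ℝ satisfy a² < λ < b² and D(D w) = λ w, then w = 0. In other words, D² has no eigenvalue in the open interval (a², b²). -/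
/-!
Write `w = u + v` with `u ∈ E`, `v ∈ Eᗮ`. Pairing `D² w = λ w` with `u - v` and using the symmetry
of `D` gives `‖D u‖² - ‖D v‖² = λ (‖u‖² - ‖v‖²)`. The bounds on `D` turn this into
`(λ - a²) ‖u‖² + (b² - λ) ‖v‖² ≤ 0`, and both coefficients are positive.
-/

open scoped InnerProductSpace

section

variable {H : Type*} [NormedAddCommGroup H] [InnerProductSpace ℝ H]

theorem LinearMap.IsSymmetric.norm_sq_sub_norm_sq_eq_of_apply_apply_eq_smul {D : H →ₗ[ℝ] H}
    (hD : D.IsSymmetric) {u v : H} (huv : ⟪u, v⟫_ℝ = 0) {lam : ℝ}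
    (heig : D (D (u + v)) = lam • (u + v)) :
    ‖D u‖ ^ 2 - ‖D v‖ ^ 2 = lam * (‖u‖ ^ 2 - ‖v‖ ^ 2) := by
  have hvu : ⟪v, u⟫_ℝ = 0 := by rw [real_inner_comm, huv]
  calc ‖D u‖ ^ 2 - ‖D v‖ ^ 2 = ⟪D (u + v), D (u - v)⟫_ℝ := by
        simp only [map_add, map_sub, inner_add_left, inner_sub_right, real_inner_self_eq_norm_sq,
          real_inner_comm (D u) (D v)]
        ring
    _ = ⟪lam • (u + v), u - v⟫_ℝ := by rw [← heig, hD (D (u + v))]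
    _ = lam * (‖u‖ ^ 2 - ‖v‖ ^ 2) := by
        simp only [real_inner_smul_left, inner_add_left, inner_sub_right,
          real_inner_self_eq_norm_sq, huv, hvu]
        ring

end

theorem eigenvalue_gap_general
    (H : Type*) [NormedAddCommGroup H] [InnerProductSpace ℝ H]
    (D : H →ₗ[ℝ] H)
    (hsym : ∀ x y : H, (inner ℝ (D x) y : ℝ) = (inner ℝ x (D y) : ℝ))
    (E : Submodule ℝ H) [FiniteDimensional ℝ E]
    (a b : ℝ) (hab : a < b)
    (hupper : ∀ w ∈ E, ‖D w‖ ≤ a * ‖w‖)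
    (hlower : ∀ w ∈ Eᗮ, b * ‖w‖ ≤ ‖D w‖)
    (w : H) (lam : ℝ) (h1 : a ^ 2 < lam) (h2 : lam < b ^ 2)
    (heig : D (D w) = lam • w) : w = 0 := by
  have hb : 0 < b := by nlinarith
  obtain ⟨u, hu, v, hv, rfl⟩ := E.exists_add_mem_mem_orthogonal w
  have hnorm := LinearMap.IsSymmetric.norm_sq_sub_norm_sq_eq_of_apply_apply_eq_smul hsym
    ((E.mem_orthogonal v).mp hv u hu) heig
  have hDu : ‖D u‖ ^ 2 ≤ a ^ 2 * ‖u‖ ^ 2 := by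
    rw [← mul_pow]; exact pow_le_pow_left₀ (norm_nonneg _) (hupper u hu) 2
  have hDv : b ^ 2 * ‖v‖ ^ 2 ≤ ‖D v‖ ^ 2 := by
    rw [← mul_pow]; exact pow_le_pow_left₀ (by positivity) (hlower v hv) 2
  have hgap : (lam - a ^ 2) * ‖u‖ ^ 2 + (b ^ 2 - lam) * ‖v‖ ^ 2 ≤ 0 := by linarith
  have hu0 : ‖u‖ ^ 2 = 0 := by nlinarith [sq_nonneg ‖u‖, sq_nonneg ‖v‖]
  have hv0 : ‖v‖ ^ 2 = 0 := by nlinarith [sq_nonneg ‖u‖, sq_nonneg ‖v‖]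
  rw [sq_eq_zero_iff, norm_eq_zero] at hu0 hv0
  rw [hu0, hv0, add_zero]

/-- Eigenvalue gap: if a symmetric linear map `D` on a real inner product space is
bounded above by `a` on a finite-dimensional subspace `E` and bounded below by `b > a`
on its orthogonal complement, then `D²` has no eigenvalue in the open interval
`(a², b²)`. -/
theorem eigenvalue_gap
    (H : Type*) [NormedAddCommGroup H] [InnerProductSpace ℝ H]
    (D : H →ₗ[ℝ] H)
    (hsym : ∀ x y : H, (inner ℝ (D x) y : ℝ) = (inner ℝ x (D y) : ℝ))
    (E : Submodule ℝ H) [FiniteDimensional ℝ E]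
    (a b : ℝ) (ha : 0 ≤ a) (hab : a < b)
    (hupper : ∀ w ∈ E, ‖D w‖ ≤ a * ‖w‖)
    (hlower : ∀ w ∈ Eᗮ, b * ‖w‖ ≤ ‖D w‖)
    (w : H) (lam : ℝ) (h1 : a ^ 2 < lam) (h2 : lam < b ^ 2)
    (heig : D (D w) = lam • w) : w = 0 :=
  eigenvalue_gap_general H D hsym E a b hab hupper hlower w lam h1 h2 heig
end

section
/- In the abstract mapping cone setting, assume additionally that each C^k is finite-dimensional and C^k = 0 for k < 0 and for k > m (m ∈ ℕ). Let μ_k = dim C^k, let v_k = rank(𝒞 : C^k → C^{k+ℓ}), and let b_k = dim ker(D_k) − rank(D_{k-1}) be the dimension of the k-th cohomology of the mapping cone complex. Then for every k ∈ ℤ: Σ_{j ≤ k} (−1)^{k−j} b_j ≤ Σ_{j ≤ k} (−1)^{k−j} (μ_j − v_{j−ℓ} + μ_{j−ℓ+1} − v_{j−ℓ+1}), where both sums have only finitely many nonzero terms. -/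
lemma mcmi_sum_step (f : ℤ → ℤ) (k : ℤ) (hk : -1 ≤ k) :
    ∑ j ∈ Finset.Icc (-1:ℤ) (k+1), (-1:ℤ)^((k+1-j).toNat) * f j
      = f (k+1) - ∑ j ∈ Finset.Icc (-1:ℤ) k, (-1:ℤ)^((k-j).toNat) * f j := by
  have hins : Finset.Icc (-1:ℤ) (k+1) = insert (k+1) (Finset.Icc (-1) k) := by
    ext x; simp only [Finset.mem_Icc, Finset.mem_insert]; omega
  have hnm : (k+1) ∉ Finset.Icc (-1:ℤ) k := by
    simp only [Finset.mem_Icc]; omega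
  rw [hins, Finset.sum_insert hnm]
  have h0 : (k+1-(k+1)).toNat = 0 := by omega
  rw [h0, pow_zero, one_mul]
  have h1 : ∑ j ∈ Finset.Icc (-1:ℤ) k, (-1:ℤ)^((k+1-j).toNat) * f j
      = ∑ j ∈ Finset.Icc (-1:ℤ) k, -((-1:ℤ)^((k-j).toNat) * f j) := by
    refine Finset.sum_congr rfl fun j hj => ?_
    simp only [Finset.mem_Icc] at hj
    have h2 : (k+1-j).toNat = (k-j).toNat + 1 := by omega
    rw [h2, pow_succ]; ring
  rw [h1, Finset.sum_neg_distrib]; ring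

lemma mcmi_base (f : ℤ → ℤ) :
    ∑ j ∈ Finset.Icc (-1:ℤ) (-1), (-1:ℤ)^(((-1:ℤ)-j).toNat) * f j = f (-1) := by
  simp

/-- Mapping cone Morse inequalities (Clausen–Tang–Tseng, abstract form): for a mapping
cone complex of finite-dimensional spaces vanishing outside degrees `0 ≤ k ≤ m`,
`Σ_{j ≤ k} (−1)^{k−j} b_j ≤ Σ_{j ≤ k} (−1)^{k−j} (μ_j − v_{j−ℓ} + μ_{j−ℓ+1} − v_{j−ℓ+1})`.
All terms of the sums vanish for `j < −1`, so the sums over `j ≤ k` are written as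
sums over `j ∈ Icc (−1) k`.  The sign `(-1)^{ℓ-1}` in the cone differential is
written `(-1)^{ℓ+1}`, which agrees with it as a sign for all ℓ. -/
theorem mapping_cone_morse_inequalities
    (K : Type*) [Field K] (ℓ m : ℕ)
    (C : ℤ → Type*) [∀ k, AddCommGroup (C k)] [∀ k, Module K (C k)]
    [∀ k, FiniteDimensional K (C k)]
    (hvanish : ∀ k : ℤ, (k < 0 ∨ (m : ℤ) < k) → Subsingleton (C k))
    (d : ∀ k l : ℤ, k + 1 = l → (C k →ₗ[K] C l))
    (cC : ∀ k l : ℤ, k + (ℓ : ℤ) = l → (C k →ₗ[K] C l))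
    (hdd : ∀ (k l m' : ℤ) (h1 : k + 1 = l) (h2 : l + 1 = m'),
      (d l m' h2).comp (d k l h1) = 0)
    (hanti : ∀ (k l l' m' : ℤ) (h1 : k + (ℓ : ℤ) = l) (h2 : l + 1 = m')
      (h3 : k + 1 = l') (h4 : l' + (ℓ : ℤ) = m'),
      (d l m' h2).comp (cC k l h1) = ((-1 : K) ^ ℓ) • ((cC l' m' h4).comp (d k l' h3)))
    (D : ∀ k l : ℤ, k + 1 = l →
      ((C k × C (k - ℓ + 1)) →ₗ[K] (C l × C (l - ℓ + 1))))
    (hD : ∀ (k l : ℤ) (h : k + 1 = l) (a : C k) (b : C (k - ℓ + 1)),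
      D k l h (a, b) =
        (d k l h a + cC (k - ℓ + 1) l (by omega) b,
         ((-1 : K) ^ (ℓ + 1)) • d (k - ℓ + 1) (l - ℓ + 1) (by omega) b))
    (μ : ℤ → ℤ)
    (hμ : ∀ k : ℤ, μ k = Module.finrank K (C k))
    (v : ℤ → ℤ)
    (hv : ∀ k : ℤ, v k = Module.finrank K (LinearMap.range (cC k (k + ℓ) rfl)))
    (b : ℤ → ℤ)
    (hb : ∀ k : ℤ, b k =
      (Module.finrank K (LinearMap.ker (D k (k + 1) rfl)) : ℤ)
        - Module.finrank K (LinearMap.range (D (k - 1) k (by omega)))) :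
    ∀ k : ℤ,
      ∑ j ∈ Finset.Icc (-1 : ℤ) k, (-1 : ℤ) ^ (k - j).toNat * b j
        ≤ ∑ j ∈ Finset.Icc (-1 : ℤ) k,
            (-1 : ℤ) ^ (k - j).toNat
              * (μ j - v (j - ℓ) + μ (j - ℓ + 1) - v (j - ℓ + 1)) := by
  -- congruence lemmas for proofs of the index equations
  have hRc : ∀ (k l l' : ℤ) (h : k + 1 = l) (h' : k + 1 = l'),
      Module.finrank K (LinearMap.range (D k l h))
        = Module.finrank K (LinearMap.range (D k l' h')) := by
    intro k l l' h h'; subst h; subst h'; rfl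
  have hCc : ∀ (k l l' : ℤ) (h : k + (ℓ : ℤ) = l) (h' : k + (ℓ : ℤ) = l'),
      Module.finrank K (LinearMap.range (cC k l h))
        = Module.finrank K (LinearMap.range (cC k l' h')) := by
    intro k l l' h h'; subst h; subst h'; rfl
  -- R k = rank of D_k, as an integer
  set R : ℤ → ℤ :=
    fun k => (Module.finrank K (LinearMap.range (D k (k + 1) rfl)) : ℤ) with hR
  -- b in terms of dimensions and ranks
  have hbR : ∀ k : ℤ, b k = (μ k + μ (k - ℓ + 1)) - R k - R (k - 1) := by
    intro k
    have h1 : Module.finrank K (LinearMap.range (D k (k + 1) rfl))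
        + Module.finrank K (LinearMap.ker (D k (k + 1) rfl))
        = Module.finrank K (C k × C (k - ℓ + 1)) :=
      LinearMap.finrank_range_add_finrank_ker _
    have h2 : Module.finrank K (C k × C (k - ℓ + 1))
        = Module.finrank K (C k) + Module.finrank K (C (k - ℓ + 1)) :=
      Module.finrank_prod
    have h3 : Module.finrank K (LinearMap.range (D (k - 1) k (by omega)))
        = Module.finrank K (LinearMap.range (D (k - 1) (k - 1 + 1) rfl)) :=
      hRc _ _ _ _ _
    rw [hb k, hμ k, hμ (k - ℓ + 1), h3]
    simp only [hR]
    push_cast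
    omega
  -- vanishing of ranks in negative degrees
  have hfr0 : ∀ k : ℤ, k < 0 → Module.finrank K (C k) = 0 := by
    intro k hk
    have := hvanish k (Or.inl hk)
    exact Module.finrank_zero_of_subsingleton
  have hRneg : R (-2) = 0 := by
    have hle : Module.finrank K (LinearMap.range (D (-2) (-2 + 1) rfl))
        ≤ Module.finrank K (C (-2) × C (-2 - ℓ + 1)) :=
      LinearMap.finrank_range_le _
    have h2 : Module.finrank K (C (-2) × C (-2 - ℓ + 1))
        = Module.finrank K (C (-2)) + Module.finrank K (C (-2 - ℓ + 1)) :=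
      Module.finrank_prod
    have e1 : Module.finrank K (C (-2)) = 0 := hfr0 _ (by omega)
    have e2 : Module.finrank K (C (-2 - ℓ + 1)) = 0 := hfr0 _ (by omega)
    simp only [hR]
    omega
  have hvneg : ∀ k : ℤ, k < 0 → v k = 0 := by
    intro k hk
    have hle : Module.finrank K (LinearMap.range (cC k (k + ℓ) rfl))
        ≤ Module.finrank K (C k) := LinearMap.finrank_range_le _
    have h0 := hfr0 k hk
    rw [hv k]
    omega
  -- the key rank inequality : v (k - ℓ + 1) ≤ R k
  have hrank : ∀ k : ℤ, v (k - ℓ + 1) ≤ R k := by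
    intro k
    set g : C (k - ℓ + 1) →ₗ[K] C (k + 1) :=
      (LinearMap.fst K (C (k + 1)) (C (k + 1 - ℓ + 1))).comp
        ((D k (k + 1) rfl).comp (LinearMap.inr K (C k) (C (k - ℓ + 1)))) with hg
    have hgc : g = cC (k - ℓ + 1) (k + 1) (by omega) := by
      apply LinearMap.ext
      intro x
      have := hD k (k + 1) rfl 0 x
      simp only [hg, LinearMap.comp_apply, LinearMap.inr_apply, this,
        LinearMap.fst_apply, map_zero, zero_add]
    have h1 : Module.finrank K (LinearMap.range (cC (k - ℓ + 1) (k - ℓ + 1 + ℓ) rfl))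
        = Module.finrank K (LinearMap.range g) := by
      rw [hgc]; exact hCc _ _ _ _ _
    have h2 : Module.finrank K (LinearMap.range g)
        ≤ Module.finrank K (LinearMap.range
            ((D k (k + 1) rfl).comp (LinearMap.inr K (C k) (C (k - ℓ + 1))))) := by
      rw [hg, LinearMap.range_comp]
      exact Submodule.finrank_map_le _ _
    have h3 : Module.finrank K (LinearMap.range
            ((D k (k + 1) rfl).comp (LinearMap.inr K (C k) (C (k - ℓ + 1)))))
        ≤ Module.finrank K (LinearMap.range (D k (k + 1) rfl)) :=
      Submodule.finrank_mono (LinearMap.range_comp_le_range _ _)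
    rw [hv (k - ℓ + 1)]
    simp only [hR]
    omega
  -- the two Euler-characteristic identities, proved together by induction
  have key : ∀ k : ℤ, -1 ≤ k →
      ((∑ j ∈ Finset.Icc (-1:ℤ) k, (-1:ℤ)^((k-j).toNat) * b j) + R k
        = ∑ j ∈ Finset.Icc (-1:ℤ) k, (-1:ℤ)^((k-j).toNat) * (μ j + μ (j - ℓ + 1)))
      ∧ ((∑ j ∈ Finset.Icc (-1:ℤ) k,
            (-1:ℤ)^((k-j).toNat) * (μ j - v (j - ℓ) + μ (j - ℓ + 1) - v (j - ℓ + 1)))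
          + v (k - ℓ + 1)
        = ∑ j ∈ Finset.Icc (-1:ℤ) k, (-1:ℤ)^((k-j).toNat) * (μ j + μ (j - ℓ + 1))) := by
    refine Int.le_induction ?_ ?_
    · constructor
      · rw [mcmi_base, mcmi_base]
        have h1 := hbR (-1)
        have h2 : R (-1 - 1) = 0 := by
          have : (-1 : ℤ) - 1 = -2 := by norm_num
          rw [this]; exact hRneg
        rw [h2] at h1
        omega
      · rw [mcmi_base, mcmi_base]
        have h1 : v (-1 - ℓ) = 0 := hvneg _ (by omega)
        omega
    · intro k hk ih
      obtain ⟨ih1, ih2⟩ := ih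
      constructor
      · rw [mcmi_sum_step _ _ hk, mcmi_sum_step _ _ hk]
        have h1 := hbR (k + 1)
        have h2 : R (k + 1 - 1) = R k := by
          have : k + 1 - 1 = k := by omega
          rw [this]
        rw [h2] at h1
        omega
      · rw [mcmi_sum_step _ _ hk, mcmi_sum_step _ _ hk]
        have h1 : v (k + 1 - ℓ) = v (k - ℓ + 1) := by
          have : k + 1 - (ℓ:ℤ) = k - ℓ + 1 := by omega
          rw [this]
        omega
  -- conclusion
  intro k
  rcases lt_or_ge k (-1 : ℤ) with hk | hk
  · have he : Finset.Icc (-1:ℤ) k = ∅ := by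
      apply Finset.Icc_eq_empty; omega
    rw [he]; simp
  · obtain ⟨h1, h2⟩ := key k hk
    have h3 := hrank k
    omega
end
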